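/- arXiv:1810.04327 — 5 statements merged into one kernel-verified Lean document; each statement's English description precedes it below -/
import Mathlib

section
/- Let K ≥ 2, let η : Fin K → ℝ satisfy ∑_{j=1}^K η_j = 1, and define η̄ : Fin K → ℝ by η̄_k = (1/(K-1)) ∑_{j ≠ k} η_j. Let ℓ : Fin K → ℝ be arbitrary and define the complementary loss ℓ̄ : Fin K → ℝ by ℓ̄_k = -(K-1)·ℓ_k + ∑_{j=1}^K ℓ_j. Then ∑_{k=1}^K η_k · ℓ_k = ∑_{k=1}^K η̄_k · ℓ̄_k. -/
theorem pointwise_unbiasedness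
    (K : ℕ) (hK : 2 ≤ K) (η ηbar : Fin K → ℝ)
    (hsum : ∑ j, η j = 1)
    (hbar : ∀ k, ηbar k = (1 / ((K : ℝ) - 1)) * ∑ j ∈ Finset.univ.erase k, η j)
    (ℓ ℓbar : Fin K → ℝ)
    (hℓbar : ∀ k, ℓbar k = -((K : ℝ) - 1) * ℓ k + ∑ j, ℓ j) :
    ∑ k, η k * ℓ k = ∑ k, ηbar k * ℓbar k := by
  have hK1 : (K : ℝ) - 1 ≠ 0 := by
    have : (2:ℝ) ≤ K := by exact_mod_cast hK
    linarith
  have hbar' : ∀ k, ηbar k = (1 - η k) / ((K : ℝ) - 1) := by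
    intro k
    have h2 : ∑ j ∈ Finset.univ.erase k, η j = 1 - η k := by
      have := Finset.add_sum_erase Finset.univ η (Finset.mem_univ k)
      rw [hsum] at this; linarith
    rw [hbar k, h2]; ring
  symm
  calc ∑ k, ηbar k * ℓbar k
      = ∑ k, (η k * ℓ k - ℓ k + (1 - η k) * (∑ j, ℓ j) / ((K:ℝ)-1)) := by
        refine Finset.sum_congr rfl fun k _ => ?_
        rw [hbar' k, hℓbar k]; field_simp; ring
    _ = ∑ k, η k * ℓ k := by
        rw [Finset.sum_add_distrib, Finset.sum_sub_distrib]
        have h3 : ∑ k, (1 - η k) * (∑ j, ℓ j) / ((K:ℝ)-1) = ∑ j, ℓ j := by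
          rw [← Finset.sum_div, ← Finset.sum_mul, Finset.sum_sub_distrib, hsum]
          simp only [Finset.sum_const, Finset.card_univ, Fintype.card_fin, nsmul_eq_mul, mul_one]
          field_simp
        rw [h3]; ring
end

section
/- Let K ≥ 2, let μ be a measure on a measurable space X, let η, η̄ : X → Fin K → ℝ be measurable with ∑_{j=1}^K η_j(x) = 1 and η̄_k(x) = (1/(K-1)) ∑_{j ≠ k} η_j(x) for all x and k, and let L : X → Fin K → ℝ be measurable with x ↦ ∑_k η_k(x)·L(x,k) integrable with respect to μ. Define L̄(x,k) = -(K-1)·L(x,k) + ∑_{j=1}^K L(x,j). Then ∫ ∑_{k=1}^K η̄_k(x)·L̄(x,k) dμ(x) = ∫ ∑_{k=1}^K η_k(x)·L(x,k) dμ(x). -/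
open MeasureTheory

theorem unbiasedness_class_posterior_form
    (K : ℕ) (hK : 2 ≤ K) (X : Type*) [MeasurableSpace X] (μ : Measure X)
    (η ηbar : X → Fin K → ℝ)
    (hηmeas : ∀ k, Measurable (fun x => η x k))
    (hηbarmeas : ∀ k, Measurable (fun x => ηbar x k))
    (hsum : ∀ x, ∑ j, η x j = 1)
    (hbar : ∀ x k, ηbar x k = (1 / ((K : ℝ) - 1)) * ∑ j ∈ Finset.univ.erase k, η x j)
    (L Lbar : X → Fin K → ℝ)
    (hLmeas : ∀ k, Measurable (fun x => L x k))
    (hint : Integrable (fun x => ∑ k, η x k * L x k) μ)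
    (hLbar : ∀ x k, Lbar x k = -((K : ℝ) - 1) * L x k + ∑ j, L x j) :
    ∫ x, ∑ k, ηbar x k * Lbar x k ∂μ = ∫ x, ∑ k, η x k * L x k ∂μ := by
  have hKR : (2:ℝ) ≤ (K:ℝ) := by exact_mod_cast hK
  have hc : (K:ℝ) - 1 ≠ 0 := by linarith
  have key : ∀ x, ∑ k, ηbar x k * Lbar x k = ∑ k, η x k * L x k := by
    intro x
    have herase : ∀ k : Fin K, ∑ j ∈ Finset.univ.erase k, η x j = 1 - η x k := by
      intro k
      rw [Finset.sum_erase_eq_sub (Finset.mem_univ k), hsum]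
    have hterm : ∀ k : Fin K,
        ηbar x k * Lbar x k
        = η x k * L x k - L x k + (1/((K:ℝ)-1)) * (∑ j, L x j)
          - (1/((K:ℝ)-1)) * (η x k * (∑ j, L x j)) := by
      intro k
      rw [hbar, hLbar, herase]
      field_simp
      ring
    rw [Finset.sum_congr rfl (fun k _ => hterm k)]
    rw [Finset.sum_sub_distrib, Finset.sum_add_distrib, Finset.sum_sub_distrib,
      ← Finset.mul_sum, ← Finset.mul_sum, ← Finset.sum_mul, hsum,
      Finset.sum_const, Finset.card_univ, Fintype.card_fin, nsmul_eq_mul]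
    field_simp
    ring
  exact integral_congr_ae (Filter.Eventually.of_forall (fun x => key x))
end

section
/- Let K ≥ 2, let s : ℝ → ℝ satisfy s(z) + s(-z) = 1 for all z, and let g : Fin K → ℝ. Define ℓ_OVA(k) = s(g_k) + (1/(K-1)) ∑_{k' ≠ k} s(-g_{k'}) and ℓ̄_OVA(k̄) = (1/(K-1)) ∑_{k ≠ k̄} s(g_k) + s(-g_{k̄}). Then for every k̄, -(K-1)·ℓ_OVA(k̄) + ∑_{j=1}^K ℓ_OVA(j) = (K-1)·ℓ̄_OVA(k̄) - K + 2. -/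
theorem general_comp_loss_ova_case
    (K : ℕ) (hK : 2 ≤ K) (s : ℝ → ℝ) (hs : ∀ z, s z + s (-z) = 1)
    (g : Fin K → ℝ) (ℓOVA ℓbarOVA : Fin K → ℝ)
    (hdef : ∀ k, ℓOVA k =
      s (g k) + ((1 / ((K : ℝ) - 1)) * ∑ k' ∈ Finset.univ.erase k, s (-(g k'))))
    (hbardef : ∀ kbar, ℓbarOVA kbar =
      ((1 / ((K : ℝ) - 1)) * ∑ k ∈ Finset.univ.erase kbar, s (g k)) + s (-(g kbar))) :
    ∀ kbar, -((K : ℝ) - 1) * ℓOVA kbar + ∑ j, ℓOVA j =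
      ((K : ℝ) - 1) * ℓbarOVA kbar - (K : ℝ) + 2 := by
  intro kbar
  have hK1 : (K : ℝ) - 1 ≠ 0 := by
    have : (2 : ℝ) ≤ (K : ℝ) := by exact_mod_cast hK
    linarith
  have e1 : ∀ j : Fin K, ∑ k' ∈ Finset.univ.erase j, s (-(g k'))
      = (∑ k', s (-(g k'))) - s (-(g j)) :=
    fun j => Finset.sum_erase_eq_sub (Finset.mem_univ j)
  have e2 : ∀ j : Fin K, ∑ k ∈ Finset.univ.erase j, s (g k)
      = (∑ k, s (g k)) - s (g j) :=
    fun j => Finset.sum_erase_eq_sub (Finset.mem_univ j)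
  have hST : (∑ j, s (g j)) + ∑ j, s (-(g j)) = (K : ℝ) := by
    rw [← Finset.sum_add_distrib]
    simp [hs]
  simp_rw [hdef, hbardef, e1, e2]
  rw [Finset.sum_add_distrib, ← Finset.mul_sum, Finset.sum_sub_distrib,
    Finset.sum_const, Finset.card_univ, Fintype.card_fin, nsmul_eq_mul]
  have hkb := hs (g kbar)
  field_simp
  ring_nf
  nlinarith [hST, hkb, sq_nonneg ((K:ℝ) - 1)]
end

section
/- Let K ≥ 2, let s : ℝ → ℝ satisfy s(z) + s(-z) = 1 for all z, and let g : Fin K → ℝ. Define ℓ_PC(k) = ∑_{k' ≠ k} s(g_k - g_{k'}) and ℓ̄_PC(k̄) = ∑_{k ≠ k̄} s(g_k - g_{k̄}). Then for every k̄, -(K-1)·ℓ_PC(k̄) + ∑_{j=1}^K ℓ_PC(j) = (K-1)·ℓ̄_PC(k̄) - K(K-1)/2 + (K-1). -/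
lemma sum_erase_eq_sum_ite {K : ℕ} (f : Fin K → ℝ) (k : Fin K) :
    ∑ x ∈ Finset.univ.erase k, f x = ∑ x, if x = k then 0 else f x := by
  rw [← Finset.filter_ne', Finset.sum_filter]
  exact Finset.sum_congr rfl (fun x _ => by by_cases h : x = k <;> simp [h])

theorem general_comp_loss_pc_case
    (K : ℕ) (hK : 2 ≤ K) (s : ℝ → ℝ) (hs : ∀ z, s z + s (-z) = 1)
    (g : Fin K → ℝ) (ℓPC ℓbarPC : Fin K → ℝ)
    (hdef : ∀ k, ℓPC k = ∑ k' ∈ Finset.univ.erase k, s (g k - g k'))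
    (hbardef : ∀ kbar, ℓbarPC kbar = ∑ k ∈ Finset.univ.erase kbar, s (g k - g kbar)) :
    ∀ kbar, -((K : ℝ) - 1) * ℓPC kbar + ∑ j, ℓPC j =
      ((K : ℝ) - 1) * ℓbarPC kbar - (K : ℝ) * ((K : ℝ) - 1) / 2 + ((K : ℝ) - 1) := by
  intro kbar
  -- ℓPC k + ℓbarPC k = K - 1
  have h1 : ∀ k, ℓPC k + ℓbarPC k = (K : ℝ) - 1 := by
    intro k
    rw [hdef, hbardef, ← Finset.sum_add_distrib]
    have : ∀ k' ∈ Finset.univ.erase k,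
        s (g k - g k') + s (g k' - g k) = 1 := by
      intro k' _
      have := hs (g k - g k')
      rwa [neg_sub] at this
    rw [Finset.sum_congr rfl this, Finset.sum_const,
      Finset.card_erase_of_mem (Finset.mem_univ k), Finset.card_univ, Fintype.card_fin]
    have hK1 : 1 ≤ K := le_trans (by norm_num) hK
    rw [nsmul_eq_mul, Nat.cast_sub hK1]
    push_cast; ring
  -- sums of both losses agree
  have hswap : ∑ j, ℓPC j = ∑ j, ℓbarPC j := by
    calc ∑ j, ℓPC j = ∑ j, ∑ k, if k = j then 0 else s (g j - g k) := by
          refine Finset.sum_congr rfl fun j _ => ?_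
          rw [hdef, sum_erase_eq_sum_ite]
      _ = ∑ k, ∑ j, if k = j then 0 else s (g j - g k) := by
          rw [Finset.sum_comm]
      _ = ∑ j, ℓbarPC j := by
          refine Finset.sum_congr rfl fun k _ => ?_
          rw [hbardef, sum_erase_eq_sum_ite]
          refine Finset.sum_congr rfl fun j _ => ?_
          by_cases h : j = k
          · simp [h]
          · rw [if_neg (fun hh : k = j => h hh.symm), if_neg h]
  have h2 : ∑ j, ℓPC j = (K : ℝ) * ((K : ℝ) - 1) / 2 := by
    have : (∑ j, ℓPC j) + (∑ j, ℓbarPC j) = (K : ℝ) * ((K : ℝ) - 1) := by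
      rw [← Finset.sum_add_distrib, Finset.sum_congr rfl (fun j _ => h1 j),
        Finset.sum_const, Finset.card_univ, Fintype.card_fin]
      ring
    rw [← hswap] at this
    linarith
  have h3 := h1 kbar
  rw [h2]
  nlinarith [h3]
end

section
/- Let K ≥ 2, let X be a measurable space, let ν be a finite measure on X × Fin K, and let ν̄ be a measure on X × Fin K with ν̄(A × {k}) = (1/(K-1)) ∑_{j ≠ k} ν(A × {j}) for all measurable A ⊆ X and all k. Let L, L̄ : X × Fin K → ℝ be measurable with L integrable with respect to ν and L̄ integrable with respect to ν̄, and suppose there are constants M₁, M₂ ∈ ℝ such that for every x ∈ X, ∑_{j=1}^K L(x,j) = M₁ and L(x,k) + L̄(x,k) = M₂ for every k, and 2·M₁ = K·M₂. Then ∫ L dν = (K-1) ∫ L̄ dν̄ - M₁·ν̄(X × Fin K) + M₂·ν̄(X × Fin K); in particular, when ν̄ is a probability measure, R(g;ℓ) = (K-1)·E_{ν̄}[ℓ̄] - M₁ + M₂. -/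
/-!
The uniform complementary-label assumption says exactly that `ν̄ = (K - 1)⁻¹ • ν.complLabel`,
where `ν.complLabel` moves the mass of `ν` at `(x, y)` to every `(x, k)` with `k ≠ y`; two measures
on `X × Fin K` that agree on all rectangles `A ×ˢ {k}` coincide. Hence
`(K - 1) ∫ L̄ dν̄ = ∫ ∑_{k ≠ y} L̄ (x, k) dν(x, y)`, and the constraints `L + L̄ = M₂`, `∑ L = M₁`
turn the integrand into `(K - 1) M₂ - M₁ + L (x, y)`. Since `ν̄` and `ν` have the same total mass,
`2 M₁ = K M₂` rearranges this into the claim.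
-/

open MeasureTheory
open scoped ENNReal

namespace MeasureTheory.Measure

variable {X ι : Type*} [MeasurableSpace X] [MeasurableSpace ι] [MeasurableSingletonClass ι]

theorem sum_apply_prod_singleton (μ : Measure (X × ι)) {S : Set (X × ι)}
    (hS : MeasurableSet S) (s : Finset ι) :
    ∑ k ∈ s, μ (((fun x ↦ (x, k)) ⁻¹' S) ×ˢ {k}) = μ (S ∩ Prod.snd ⁻¹' s) := by
  have hfiber (k : ι) : ((fun x ↦ (x, k)) ⁻¹' S) ×ˢ {k} = Prod.snd ⁻¹' {k} ∩ S := by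
    ext ⟨x, j⟩
    simp only [Set.mem_prod, Set.mem_preimage, Set.mem_singleton_iff, Set.mem_inter_iff]
    constructor
    · rintro ⟨h, rfl⟩; exact ⟨rfl, h⟩
    · rintro ⟨rfl, h⟩; exact ⟨h, rfl⟩
  simp_rw [hfiber, ← restrict_apply' hS]
  rw [sum_measure_preimage_singleton _ fun k _ ↦ measurable_snd (measurableSet_singleton k),
    restrict_apply' hS, Set.inter_comm]

variable [Fintype ι]

theorem apply_eq_sum_prod_singleton (μ : Measure (X × ι)) {S : Set (X × ι)}
    (hS : MeasurableSet S) :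
    μ S = ∑ k : ι, μ (((fun x ↦ (x, k)) ⁻¹' S) ×ˢ {k}) := by
  rw [sum_apply_prod_singleton μ hS, Finset.coe_univ, Set.preimage_univ, Set.inter_univ]

theorem ext_of_prod_singleton {μ μ' : Measure (X × ι)}
    (h : ∀ A, MeasurableSet A → ∀ k, μ (A ×ˢ {k}) = μ' (A ×ˢ {k})) : μ = μ' := by
  ext S hS
  rw [apply_eq_sum_prod_singleton μ hS, apply_eq_sum_prod_singleton μ' hS]
  exact Finset.sum_congr rfl fun k _ ↦ h _ (measurable_prodMk_right hS) k

noncomputable def complLabel (ν : Measure (X × ι)) : Measure (X × ι) :=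
  ∑ k, (ν.restrict {p | p.2 ≠ k}).map (fun p ↦ (p.1, k))

instance (ν : Measure (X × ι)) [IsFiniteMeasure ν] : IsFiniteMeasure ν.complLabel := by
  unfold complLabel; infer_instance

variable [DecidableEq ι]

theorem complLabel_prod_singleton (ν : Measure (X × ι)) {A : Set X} (hA : MeasurableSet A)
    (k : ι) : ν.complLabel (A ×ˢ {k}) = ∑ j ∈ Finset.univ.erase k, ν (A ×ˢ {j}) := by
  have hAk : MeasurableSet (A ×ˢ {k}) := hA.prod (measurableSet_singleton k)
  have hpre (j : ι) : (fun p : X × ι ↦ (p.1, j)) ⁻¹' (A ×ˢ {k}) =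
      if j = k then Prod.fst ⁻¹' A else ∅ := by
    split_ifs with h <;> ext <;> simp [h]
  rw [complLabel, finsetSum_apply, Finset.sum_eq_single k]
  · rw [map_apply (by fun_prop) hAk, hpre, if_pos rfl, restrict_apply (measurable_fst hA),
      show {p : X × ι | p.2 ≠ k} = Prod.snd ⁻¹' ↑(Finset.univ.erase k) by ext; simp]
    exact (sum_apply_prod_singleton ν (measurable_fst hA) _).symm
  · intro j _ hjk
    rw [map_apply (by fun_prop) hAk, hpre, if_neg hjk, measure_empty]
  · simp

theorem eq_smul_complLabel {ν νbar : Measure (X × ι)} {c : ℝ≥0∞}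
    (h : ∀ A, MeasurableSet A → ∀ k,
      νbar (A ×ˢ {k}) = c * ∑ j ∈ Finset.univ.erase k, ν (A ×ˢ {j})) :
    νbar = c • ν.complLabel :=
  ext_of_prod_singleton fun A hA k ↦ by
    rw [h A hA k, smul_apply, complLabel_prod_singleton ν hA, smul_eq_mul]

theorem integral_complLabel (ν : Measure (X × ι)) {f : X × ι → ℝ}
    (hf : Integrable f ν.complLabel) :
    ∫ p, f p ∂ν.complLabel = ∫ p, ∑ k ∈ Finset.univ.erase p.2, f (p.1, k) ∂ν := by
  have hφ (k : ι) : Measurable fun p : X × ι ↦ (p.1, k) := by fun_prop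
  have hs (k : ι) : MeasurableSet {p : X × ι | p.2 ≠ k} :=
    (measurableSet_singleton k).compl.preimage measurable_snd
  have hfk (k : ι) : Integrable f ((ν.restrict {p | p.2 ≠ k}).map (fun p ↦ (p.1, k))) :=
    integrable_finsetSum_measure.mp hf k (Finset.mem_univ k)
  have hind (k : ι) : Integrable ({p | p.2 ≠ k}.indicator fun p ↦ f (p.1, k)) ν :=
    (integrable_indicator_iff (hs k)).mpr
      ((integrable_map_measure (hfk k).aestronglyMeasurable (hφ k).aemeasurable).mp (hfk k))
  have hsum (p : X × ι) : ∑ k, {p : X × ι | p.2 ≠ k}.indicator (fun p ↦ f (p.1, k)) p =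
      ∑ k ∈ Finset.univ.erase p.2, f (p.1, k) := by
    rw [Finset.sum_indicator_eq_sum_filter]
    congr 1
    ext k; simp [eq_comm]
  calc ∫ p, f p ∂ν.complLabel
      = ∑ k, ∫ p, f (p.1, k) ∂ν.restrict {p | p.2 ≠ k} := by
        rw [complLabel, integral_finsetSum_measure fun k _ ↦ hfk k]
        exact Finset.sum_congr rfl fun k _ ↦
          integral_map (hφ k).aemeasurable (hfk k).aestronglyMeasurable
    _ = ∫ p, ∑ k, {p : X × ι | p.2 ≠ k}.indicator (fun p ↦ f (p.1, k)) p ∂ν := by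
        rw [integral_finsetSum _ fun k _ ↦ hind k]
        exact Finset.sum_congr rfl fun k _ ↦ (integral_indicator (hs k)).symm
    _ = ∫ p, ∑ k ∈ Finset.univ.erase p.2, f (p.1, k) ∂ν := by simp_rw [hsum]

theorem complLabel_real_univ (ν : Measure (X × ι)) [IsFiniteMeasure ν] :
    ν.complLabel.real Set.univ = (Fintype.card ι - 1 : ℕ) * ν.real Set.univ := by
  simpa [Finset.card_erase_of_mem, mul_comm] using integral_complLabel ν (integrable_const (1 : ℝ))

theorem integral_complLabel_of_sum_eq_of_add_eq (ν : Measure (X × ι)) [IsFiniteMeasure ν]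
    {L Lbar : X × ι → ℝ} (hL : Integrable L ν) (hLbar : Integrable Lbar ν.complLabel)
    {M₁ M₂ : ℝ} (hM₁ : ∀ x, ∑ j, L (x, j) = M₁) (hM₂ : ∀ x k, L (x, k) + Lbar (x, k) = M₂) :
    ∫ p, Lbar p ∂ν.complLabel =
      ((Fintype.card ι - 1 : ℕ) * M₂ - M₁) * ν.real Set.univ + ∫ p, L p ∂ν := by
  have hpt (p : X × ι) : ∑ k ∈ Finset.univ.erase p.2, Lbar (p.1, k) =
      ((Fintype.card ι - 1 : ℕ) * M₂ - M₁) + L p := by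
    obtain ⟨x, y⟩ := p
    dsimp only
    rw [Finset.sum_congr rfl fun k _ ↦ eq_sub_of_add_eq' (hM₂ x k), Finset.sum_sub_distrib,
      Finset.sum_erase_eq_sub (f := fun k ↦ L (x, k)) (Finset.mem_univ y), hM₁, Finset.sum_const,
      Finset.card_erase_of_mem (Finset.mem_univ y), Finset.card_univ, nsmul_eq_mul]
    ring
  rw [integral_complLabel ν hLbar]
  simp_rw [hpt]
  rw [integral_add (integrable_const _) hL, integral_const, smul_eq_mul, mul_comm]

end MeasureTheory.Measure

theorem corollary_ishida_recovery_general
    (K : ℕ) (hK : 2 ≤ K) (X : Type*) [MeasurableSpace X]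
    (ν νbar : Measure (X × Fin K)) [IsFiniteMeasure ν]
    (hcomp : ∀ (A : Set X), MeasurableSet A → ∀ k : Fin K,
      νbar (A ×ˢ ({k} : Set (Fin K))) =
        ((K : ℝ≥0∞) - 1)⁻¹ * ∑ j ∈ Finset.univ.erase k, ν (A ×ˢ ({j} : Set (Fin K))))
    (L Lbar : X × Fin K → ℝ)
    (hLint : Integrable L ν) (hLbarint : Integrable Lbar νbar)
    (M₁ M₂ : ℝ)
    (hM₁ : ∀ x : X, ∑ j, L (x, j) = M₁)
    (hM₂ : ∀ (x : X) (k : Fin K), L (x, k) + Lbar (x, k) = M₂)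
    (hM : 2 * M₁ = (K : ℝ) * M₂) :
    (∫ p, L p ∂ν =
      ((K : ℝ) - 1) * ∫ p, Lbar p ∂νbar
        - M₁ * (νbar Set.univ).toReal + M₂ * (νbar Set.univ).toReal) ∧
    (IsProbabilityMeasure νbar →
      ∫ p, L p ∂ν = ((K : ℝ) - 1) * ∫ p, Lbar p ∂νbar - M₁ + M₂) := by
  obtain ⟨n, rfl⟩ : ∃ n, K = n + 1 := ⟨K - 1, by omega⟩
  have hn : (n : ℝ) ≠ 0 := by exact_mod_cast (by omega : n ≠ 0)
  have hνbar : νbar = (n : ℝ≥0∞)⁻¹ • ν.complLabel :=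
    Measure.eq_smul_complLabel (by simpa using hcomp)
  have hLbar : Integrable Lbar ν.complLabel := by
    rwa [hνbar, integrable_smul_measure (by simp) (by simpa using hn)] at hLbarint
  have hmass : (νbar Set.univ).toReal = ν.real Set.univ := by
    rw [hνbar, Measure.smul_apply, smul_eq_mul, ENNReal.toReal_mul, ← Measure.real,
      Measure.complLabel_real_univ]
    simp [hn]
  have hrisk : (n : ℝ) * ∫ p, Lbar p ∂νbar = (n * M₂ - M₁) * ν.real Set.univ + ∫ p, L p ∂ν := by
    rw [hνbar, integral_smul_measure,
      Measure.integral_complLabel_of_sum_eq_of_add_eq ν hLint hLbar hM₁ hM₂]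
    simp [hn]
  have hrecovery : ∫ p, L p ∂ν = ((↑(n + 1) : ℝ) - 1) * ∫ p, Lbar p ∂νbar
      - M₁ * (νbar Set.univ).toReal + M₂ * (νbar Set.univ).toReal := by
    rw [Nat.cast_add_one, add_sub_cancel_right, hrisk, hmass]
    push_cast at hM
    linear_combination ν.real Set.univ * hM
  refine ⟨hrecovery, fun _ ↦ ?_⟩
  rwa [measure_univ, ENNReal.toReal_one, mul_one, mul_one] at hrecovery

theorem corollary_ishida_recovery
    (K : ℕ) (hK : 2 ≤ K) (X : Type*) [MeasurableSpace X]
    (ν νbar : Measure (X × Fin K)) [IsFiniteMeasure ν]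
    (hcomp : ∀ (A : Set X), MeasurableSet A → ∀ k : Fin K,
      νbar (A ×ˢ ({k} : Set (Fin K))) =
        ((K : ℝ≥0∞) - 1)⁻¹ * ∑ j ∈ Finset.univ.erase k, ν (A ×ˢ ({j} : Set (Fin K))))
    (L Lbar : X × Fin K → ℝ)
    (hLmeas : Measurable L) (hLbarmeas : Measurable Lbar)
    (hLint : Integrable L ν) (hLbarint : Integrable Lbar νbar)
    (M₁ M₂ : ℝ)
    (hM₁ : ∀ x : X, ∑ j, L (x, j) = M₁)
    (hM₂ : ∀ (x : X) (k : Fin K), L (x, k) + Lbar (x, k) = M₂)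
    (hM : 2 * M₁ = (K : ℝ) * M₂) :
    (∫ p, L p ∂ν =
      ((K : ℝ) - 1) * ∫ p, Lbar p ∂νbar
        - M₁ * (νbar Set.univ).toReal + M₂ * (νbar Set.univ).toReal) ∧
    (IsProbabilityMeasure νbar →
      ∫ p, L p ∂ν = ((K : ℝ) - 1) * ∫ p, Lbar p ∂νbar - M₁ + M₂) :=
  corollary_ishida_recovery_general K hK X ν νbar hcomp L Lbar hLint hLbarint M₁ M₂ hM₁ hM₂ hM
end
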